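/- arXiv:1302.4911 — 3 statements merged into one kernel-verified Lean document; each statement's English description precedes it below -/
import Mathlib

section
/- Every 2-dimensional subspace s of sl(2,ℝ) is a Lie triple system: [[s,s],s] ⊆ s. -/
/-! For traceless `2 × 2` matrices one has `[[A, B], C] = 2 tr(BC) A - 2 tr(AC) B`, so the
double bracket of elements of any subspace of `sl(2)` lies in the span of its first two
arguments, hence in the subspace. -/

open Matrix

variable {R : Type*} [CommRing R]

lemma Matrix.apply_one_one_eq_neg_of_trace_eq_zero {A : Matrix (Fin 2) (Fin 2) R}
    (hA : A.trace = 0) : A 1 1 = -A 0 0 := by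
  rw [trace_fin_two] at hA
  exact eq_neg_of_add_eq_zero_right hA

lemma Matrix.lie_lie_eq_of_trace_eq_zero {A B C : Matrix (Fin 2) (Fin 2) R}
    (hA : A.trace = 0) (hB : B.trace = 0) (hC : C.trace = 0) :
    ⁅⁅A, B⁆, C⁆ = (2 * (B * C).trace) • A - (2 * (A * C).trace) • B := by
  have hA' := apply_one_one_eq_neg_of_trace_eq_zero hA
  have hB' := apply_one_one_eq_neg_of_trace_eq_zero hB
  have hC' := apply_one_one_eq_neg_of_trace_eq_zero hC
  ext i j
  fin_cases i <;> fin_cases j <;>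
    simp [Ring.lie_def, mul_apply, trace_fin_two, hA', hB', hC'] <;> ring

theorem two_dim_subspace_lie_triple_general
    (s : Submodule ℝ (Matrix (Fin 2) (Fin 2) ℝ))
    (hsl : ∀ A ∈ s, A.trace = 0) :
    ∀ A ∈ s, ∀ B ∈ s, ∀ C ∈ s,
      (A * B - B * A) * C - C * (A * B - B * A) ∈ s := by
  intro A hA B hB C hC
  rw [← Ring.lie_def, ← Ring.lie_def,
    lie_lie_eq_of_trace_eq_zero (hsl A hA) (hsl B hB) (hsl C hC)]
  exact s.sub_mem (s.smul_mem _ hA) (s.smul_mem _ hB)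

/-- Every 2-dimensional subspace `s` of `sl(2,ℝ)` is a Lie triple system: `[[s,s],s] ⊆ s`. -/
theorem two_dim_subspace_lie_triple
    (s : Submodule ℝ (Matrix (Fin 2) (Fin 2) ℝ))
    (hsl : ∀ A ∈ s, A.trace = 0)
    (hdim : Module.finrank ℝ s = 2) :
    ∀ A ∈ s, ∀ B ∈ s, ∀ C ∈ s,
      (A * B - B * A) * C - C * (A * B - B * A) ∈ s :=
  two_dim_subspace_lie_triple_general s hsl
end

section
/- The map Ψ : SL(2,ℝ) → ℝP⁴ sending [[a,b],[c,d]] to the projective point [a-d : b+c : b-c : a+d-2 : a+d+2] is well-defined (the image vector is never zero), lands in the projectivized null cone of the quadratic form Q(X,Y,Z,U,V) = X² + Y² - Z² - UV, and is injective. -/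
/-! The last two coordinates of `psiVec M` always differ by `4`, so the vector is never zero and
two proportional image vectors must in fact be equal. The coordinates `a - d`, `a + d`, `b + c`,
`b - c` determine the matrix, and `Q(psiVec M) = 4 (1 - det M)` vanishes on `SL(2,ℝ)`. -/

open Matrix

/-- The map `Ψ` in homogeneous coordinates:
`[[a,b],[c,d]] ↦ (a-d, b+c, b-c, a+d-2, a+d+2)`. -/
def psiVec (M : Matrix (Fin 2) (Fin 2) ℝ) : Fin 5 → ℝ :=
  ![M 0 0 - M 1 1, M 0 1 + M 1 0, M 0 1 - M 1 0, M 0 0 + M 1 1 - 2, M 0 0 + M 1 1 + 2]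

/-- The quadratic form `Q(X,Y,Z,U,V) = X² + Y² - Z² - UV` of signature `(3,2)`. -/
def einQ (v : Fin 5 → ℝ) : ℝ := v 0 ^ 2 + v 1 ^ 2 - v 2 ^ 2 - v 3 * v 4

lemma psiVec_four_sub_three (M : Matrix (Fin 2) (Fin 2) ℝ) : psiVec M 4 - psiVec M 3 = 4 := by
  simp only [psiVec, cons_val]
  ring

lemma psiVec_ne_zero (M : Matrix (Fin 2) (Fin 2) ℝ) : psiVec M ≠ 0 := by
  intro h
  have := psiVec_four_sub_three M
  simp [h] at this

lemma einQ_psiVec (M : Matrix (Fin 2) (Fin 2) ℝ) : einQ (psiVec M) = 4 * (1 - M.det) := by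
  simp only [einQ, psiVec, cons_val, det_fin_two]
  ring

lemma psiVec_injective : Function.Injective psiVec := by
  intro M N h
  have hx := congrFun h 0
  have hy := congrFun h 1
  have hz := congrFun h 2
  have hu := congrFun h 3
  simp only [psiVec, cons_val] at hx hy hz hu
  ext i j
  fin_cases i <;> fin_cases j <;> simp <;> linarith

lemma eq_one_of_psiVec_eq_smul {M N : Matrix (Fin 2) (Fin 2) ℝ} {c : ℝ}
    (h : psiVec M = c • psiVec N) : c = 1 := by
  have h4 : (4 : ℝ) = c * 4 :=
    calc (4 : ℝ) = psiVec M 4 - psiVec M 3 := (psiVec_four_sub_three M).symm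
      _ = c * (psiVec N 4 - psiVec N 3) := by simp only [h, Pi.smul_apply, smul_eq_mul]; ring
      _ = c * 4 := by rw [psiVec_four_sub_three]
  linarith

/-- `Ψ : SL(2,ℝ) → ℝP⁴` is well defined (the image vector is never zero), lands in the
projectivized null cone of `Q`, and is injective as a map to projective space. -/
theorem psi_well_defined_null_injective :
    (∀ M : Matrix (Fin 2) (Fin 2) ℝ, M.det = 1 → psiVec M ≠ 0 ∧ einQ (psiVec M) = 0) ∧
    (∀ M N : Matrix (Fin 2) (Fin 2) ℝ, M.det = 1 → N.det = 1 →
      (∃ c : ℝ, c ≠ 0 ∧ psiVec M = c • psiVec N) → M = N) := by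
  refine ⟨fun M hM => ⟨psiVec_ne_zero M, by rw [einQ_psiVec, hM]; ring⟩, ?_⟩
  rintro M N - - ⟨c, -, h⟩
  obtain rfl := eq_one_of_psiVec_eq_smul h
  exact psiVec_injective (by rwa [one_smul] at h)
end

section
/- A point [X:Y:Z:U:V] on the projectivized null cone of Q(X,Y,Z,U,V) = X² + Y² - Z² - UV with U ≠ V lies in the image of Ψ : SL(2,ℝ) → Ein³; explicitly, the matrix with entries a = (2X+U+V)/(V-U), b = 2(Y+Z)/(V-U), c = 2(Y-Z)/(V-U), d = (-2X+U+V)/(V-U) has determinant 1 and maps to [X:Y:Z:U:V] under Ψ. -/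
/-! With `w = V - U`, the matrix `A` with entries `a, b, c, d` as above satisfies `a - d = 4X/w`,
`b ± c = 4Y/w, 4Z/w` and `a + d ∓ 2 = 4U/w, 4V/w`, so `Ψ(A) = (4/w) • (X, Y, Z, U, V)` whenever
`U ≠ V`; and `det A = 1 - 4 Q/w²`, which is `1` exactly on the null cone. -/

open Matrix

noncomputable def psiPreimage (X Y Z U V : ℝ) : Matrix (Fin 2) (Fin 2) ℝ :=
  !![(2 * X + U + V) / (V - U), 2 * (Y + Z) / (V - U);
     2 * (Y - Z) / (V - U), (-2 * X + U + V) / (V - U)]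

variable {X Y Z U V : ℝ}

theorem det_psiPreimage (hUV : U ≠ V) :
    (psiPreimage X Y Z U V).det = 1 - 4 * (X ^ 2 + Y ^ 2 - Z ^ 2 - U * V) / (V - U) ^ 2 := by
  have hw : V - U ≠ 0 := sub_ne_zero.mpr hUV.symm
  rw [psiPreimage, det_fin_two_of]
  field_simp
  ring

theorem psiVec_psiPreimage (hUV : U ≠ V) :
    psiVec (psiPreimage X Y Z U V) = (4 / (V - U)) • ![X, Y, Z, U, V] := by
  have hw : V - U ≠ 0 := sub_ne_zero.mpr hUV.symm
  ext i
  fin_cases i <;> simp [psiVec, psiPreimage] <;> field_simp <;> ring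

theorem psi_surjective_off_fixed_set_general
    (X Y Z U V : ℝ)
    (hQ : X ^ 2 + Y ^ 2 - Z ^ 2 - U * V = 0)
    (hUV : U ≠ V) :
    (!![(2 * X + U + V) / (V - U), 2 * (Y + Z) / (V - U);
        2 * (Y - Z) / (V - U), (-2 * X + U + V) / (V - U)]).det = 1 ∧
    ∃ c : ℝ, c ≠ 0 ∧
      psiVec !![(2 * X + U + V) / (V - U), 2 * (Y + Z) / (V - U);
                2 * (Y - Z) / (V - U), (-2 * X + U + V) / (V - U)] = c • ![X, Y, Z, U, V] := by
  refine ⟨?_, 4 / (V - U), div_ne_zero four_ne_zero (sub_ne_zero.mpr hUV.symm),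
    psiVec_psiPreimage hUV⟩
  exact (det_psiPreimage hUV).trans (by rw [hQ]; ring)

/-- Any point `[X:Y:Z:U:V]` of the projectivized null cone of
`Q = X² + Y² - Z² - UV` with `U ≠ V` lies in the image of `Ψ`, via the explicit matrix
with entries `a = (2X+U+V)/(V-U)`, `b = 2(Y+Z)/(V-U)`, `c = 2(Y-Z)/(V-U)`,
`d = (-2X+U+V)/(V-U)`, which has determinant `1`. -/
theorem psi_surjective_off_fixed_set
    (X Y Z U V : ℝ)
    (hvec : ![X, Y, Z, U, V] ≠ 0)
    (hQ : X ^ 2 + Y ^ 2 - Z ^ 2 - U * V = 0)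
    (hUV : U ≠ V) :
    (!![(2 * X + U + V) / (V - U), 2 * (Y + Z) / (V - U);
        2 * (Y - Z) / (V - U), (-2 * X + U + V) / (V - U)]).det = 1 ∧
    ∃ c : ℝ, c ≠ 0 ∧
      psiVec !![(2 * X + U + V) / (V - U), 2 * (Y + Z) / (V - U);
                2 * (Y - Z) / (V - U), (-2 * X + U + V) / (V - U)] = c • ![X, Y, Z, U, V] :=
  psi_surjective_off_fixed_set_general X Y Z U V hQ hUV
end
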